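/- arXiv:2110.09102 — 4 statements merged into one kernel-verified Lean document; each statement's English description precedes it below -/
import Mathlib

section
/- If A and B are tight sets in a k-connected graph G (i.e., |∂A| = k, A* ≠ ∅, |∂B| = k, B* ≠ ∅, where ∂X is the neighborhood of X and X* = V \ (X ∪ ∂X)), and both A ∩ B* and B ∩ A* are nonempty, then both A ∩ B* and B ∩ A* are tight sets. -/
open Set

variable {V : Type*} [Fintype V] [DecidableEq V]

/-- The boundary (neighborhood) of a vertex set: vertices outside `A` adjacent to `A`. -/
def bdry (G : SimpleGraph V) (A : Set V) : Set V := {v | v ∉ A ∧ ∃ a ∈ A, G.Adj a v}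

/-- The "node complement" `A* = V \ (A ∪ ∂A)`. -/
def nstar (G : SimpleGraph V) (A : Set V) : Set V := (A ∪ bdry G A)ᶜ

/-- `C` is a vertex set separating `s` from `t`. -/
def IsSep (G : SimpleGraph V) (s t : V) (C : Set V) : Prop :=
  s ∉ C ∧ t ∉ C ∧ ∀ p : G.Walk s t, ∃ v ∈ C, v ∈ p.support

/-- `κ(s,t)`: minimum size of an `s`–`t` vertex cut. -/
noncomputable def kappa (G : SimpleGraph V) (s t : V) : ℕ :=
  sInf {n | ∃ C : Set V, C.ncard = n ∧ IsSep G s t C}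

/-- A set is tight if `|∂A| = k` and `A* ≠ ∅`. -/
def Tight (G : SimpleGraph V) (k : ℕ) (A : Set V) : Prop :=
  (bdry G A).ncard = k ∧ (nstar G A).Nonempty

/-- A set is small if `|A| ≤ (n - k)/2`. -/
def SmallSet (k : ℕ) (A : Set V) : Prop := 2 * A.ncard + k ≤ Fintype.card V

/-- `G` is `k`-connected. -/
def KConn (G : SimpleGraph V) (k : ℕ) : Prop :=
  k + 1 ≤ Fintype.card V ∧
    ∀ s t : V, s ≠ t → ∀ C : Set V, IsSep G s t C → k ≤ C.ncard

/-- degree of a vertex -/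
noncomputable def deg (G : SimpleGraph V) (v : V) : ℕ := (G.neighborSet v).ncard

/-- `X` is an `st`-tight set: `s ∈ X`, `t ∈ X*` and `|∂X| = κ(s,t)`. -/
def TightST (G : SimpleGraph V) (s t : V) (X : Set V) : Prop :=
  s ∈ X ∧ t ∈ nstar G X ∧ (bdry G X).ncard = kappa G s t

/-- `R_s`: intersection of all small tight sets containing `s`. -/
def Rmin (G : SimpleGraph V) (k : ℕ) (s : V) : Set V :=
  ⋂₀ {A : Set V | Tight G k A ∧ SmallSet k A ∧ s ∈ A}

/-- Two sets are laminar if disjoint or one contains the other. -/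
def Laminar (X Y : Set V) : Prop := Disjoint X Y ∨ X ⊆ Y ∨ Y ⊆ X

/-- `d`-degeneracy: every nonempty vertex subset has a vertex with at most `d`
neighbors inside it. -/
def Degenerate (G : SimpleGraph V) (d : ℕ) : Prop :=
  ∀ W : Set V, W.Nonempty → ∃ v ∈ W, (G.neighborSet v ∩ W).ncard ≤ d

/-- The set of vertices reachable from `s` avoiding `C`. -/
def Reach (G : SimpleGraph V) (C : Set V) (s : V) : Set V :=
  {v | ∃ p : G.Walk s v, ∀ u ∈ p.support, u ∉ C}

lemma mem_nstar {G : SimpleGraph V} {A : Set V} {v : V} :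
    v ∈ nstar G A ↔ v ∉ A ∧ v ∉ bdry G A := by
  simp [nstar]

lemma walk_hits_bdry {G : SimpleGraph V} {X : Set V} :
    ∀ {s t : V} (p : G.Walk s t), s ∈ X → t ∉ X → ∃ v ∈ bdry G X, v ∈ p.support := by
  intro s t p
  induction p with
  | nil => intro hs ht; exact absurd hs ht
  | @cons a b c hadj q ih =>
    intro hs ht
    by_cases hu : b ∈ X
    · obtain ⟨v, hv, hvs⟩ := ih hu ht
      exact ⟨v, hv, by simp [hvs]⟩
    · exact ⟨b, ⟨hu, a, hs, hadj⟩, by simp⟩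

lemma kconn_le {G : SimpleGraph V} {k : ℕ} (hG : KConn G k) {X : Set V}
    (hX : X.Nonempty) (hX' : (nstar G X).Nonempty) : k ≤ (bdry G X).ncard := by
  obtain ⟨s, hs⟩ := hX
  obtain ⟨t, htt⟩ := hX'
  rw [mem_nstar] at htt
  have hst : s ≠ t := fun h => htt.1 (h ▸ hs)
  refine hG.2 s t hst _ ⟨fun h => h.1 hs, htt.2, fun p => ?_⟩
  exact walk_hits_bdry p hs htt.1

lemma bdry_inter_nstar_subset {G : SimpleGraph V} (A B : Set V) :
    bdry G (A ∩ nstar G B) ⊆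
      (A ∩ bdry G B) ∪ (bdry G A ∩ nstar G B) ∪ (bdry G A ∩ bdry G B) := by
  rintro v ⟨hv, a, ⟨haA, haB⟩, hadj⟩
  rw [mem_nstar] at haB
  -- v ∈ B* ∪ ∂B
  have hvB : v ∈ nstar G B ∨ v ∈ bdry G B := by
    by_cases h1 : v ∈ nstar G B
    · exact Or.inl h1
    · right
      rw [mem_nstar] at h1
      push_neg at h1
      by_cases hvb : v ∈ B
      · exact absurd ⟨haB.1, v, hvb, hadj.symm⟩ haB.2
      · exact h1 hvb
  by_cases hvA : v ∈ A
  · have hvns : v ∉ nstar G B := fun h => hv ⟨hvA, h⟩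
    rcases hvB with h | h
    · exact absurd h hvns
    · exact Or.inl (Or.inl ⟨hvA, h⟩)
  · have hvbA : v ∈ bdry G A := ⟨hvA, a, haA, hadj⟩
    rcases hvB with h | h
    · exact Or.inl (Or.inr ⟨hvbA, h⟩)
    · exact Or.inr ⟨hvbA, h⟩

lemma ncard_partite {G : SimpleGraph V} (S B : Set V) :
    S.ncard = (S ∩ B).ncard + (S ∩ bdry G B).ncard + (S ∩ nstar G B).ncard := by
  have h1 : S = (S ∩ B) ∪ (S ∩ bdry G B) ∪ (S ∩ nstar G B) := by
    ext v
    by_cases hb : v ∈ B <;> by_cases hd : v ∈ bdry G B <;>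
      simp [mem_nstar, hb, hd] <;> tauto
  have d1 : Disjoint (S ∩ B) (S ∩ bdry G B) :=
    Set.disjoint_left.2 (fun v hv hv' => hv'.2.1 hv.2)
  have d2 : Disjoint ((S ∩ B) ∪ (S ∩ bdry G B)) (S ∩ nstar G B) := by
    rw [Set.disjoint_left]
    rintro v (hv | hv) hv' <;> have h' := mem_nstar.mp hv'.2
    · exact h'.1 hv.2
    · exact h'.2 hv.2
  conv_lhs => rw [h1]
  rw [Set.ncard_union_eq d2 (Set.toFinite _) (Set.toFinite _),
    Set.ncard_union_eq d1 (Set.toFinite _) (Set.toFinite _)]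

theorem stmt0 (G : SimpleGraph V) (k : ℕ) (A B : Set V)
    (hG : KConn G k) (hA : Tight G k A) (hB : Tight G k B)
    (h1 : (A ∩ nstar G B).Nonempty) (h2 : (B ∩ nstar G A).Nonempty) :
    Tight G k (A ∩ nstar G B) ∧ Tight G k (B ∩ nstar G A) := by
  set X := A ∩ nstar G B with hXdef
  set Y := B ∩ nstar G A with hYdef
  have hbX := bdry_inter_nstar_subset (G := G) A B
  have hbY := bdry_inter_nstar_subset (G := G) B A
  -- Y ⊆ nstar G X
  have hYX : Y ⊆ nstar G X := by
    rintro y ⟨hyB, hyA⟩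
    rw [mem_nstar] at hyA ⊢
    refine ⟨fun h => hyA.1 h.1, fun h => ?_⟩
    rcases hbX h with (⟨_, hd⟩ | ⟨hd, _⟩) | ⟨hd, _⟩
    · exact hd.1 hyB
    · exact hyA.2 hd
    · exact hyA.2 hd
  have hXY : X ⊆ nstar G Y := by
    rintro x ⟨hxA, hxB⟩
    rw [mem_nstar] at hxB ⊢
    refine ⟨fun h => hxB.1 h.1, fun h => ?_⟩
    rcases hbY h with (⟨_, hd⟩ | ⟨hd, _⟩) | ⟨hd, _⟩
    · exact hd.1 hxA
    · exact hxB.2 hd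
    · exact hxB.2 hd
  have hnX : (nstar G X).Nonempty := h2.mono hYX
  have hnY : (nstar G Y).Nonempty := h1.mono hXY
  have hkX : k ≤ (bdry G X).ncard := kconn_le hG h1 hnX
  have hkY : k ≤ (bdry G Y).ncard := kconn_le hG h2 hnY
  have cX : (bdry G X).ncard ≤
      (A ∩ bdry G B).ncard + (bdry G A ∩ nstar G B).ncard + (bdry G A ∩ bdry G B).ncard :=
    le_trans (Set.ncard_le_ncard hbX (Set.toFinite _))
      (le_trans (Set.ncard_union_le _ _) (by
        have := Set.ncard_union_le (A ∩ bdry G B) (bdry G A ∩ nstar G B)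
        omega))
  have cY : (bdry G Y).ncard ≤
      (B ∩ bdry G A).ncard + (bdry G B ∩ nstar G A).ncard + (bdry G B ∩ bdry G A).ncard :=
    le_trans (Set.ncard_le_ncard hbY (Set.toFinite _))
      (le_trans (Set.ncard_union_le _ _) (by
        have := Set.ncard_union_le (B ∩ bdry G A) (bdry G B ∩ nstar G A)
        omega))
  have pA : (bdry G A).ncard = (bdry G A ∩ B).ncard + (bdry G A ∩ bdry G B).ncard
      + (bdry G A ∩ nstar G B).ncard := ncard_partite (G := G) _ _
  have pB : (bdry G B).ncard = (bdry G B ∩ A).ncard + (bdry G B ∩ bdry G A).ncard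
      + (bdry G B ∩ nstar G A).ncard := ncard_partite (G := G) _ _
  rw [Set.inter_comm (bdry G A) B] at pA
  rw [Set.inter_comm (bdry G B) A, Set.inter_comm (bdry G B) (bdry G A)] at pB
  rw [Set.inter_comm (bdry G B) (bdry G A)] at cY
  have hAk := hA.1
  have hBk := hB.1
  refine ⟨⟨by omega, hnX⟩, ⟨by omega, hnY⟩⟩
end

section
/- Let S be a finite set and (R_s)_{s∈S} a family of subsets of a finite set V such that each s ∈ S has s ∈ R_s, and for each s the set ∂R_s ⊆ V has size at most k, and whenever R_a and R_b are not laminar we have a ∈ ∂R_b or b ∈ ∂R_a. Then S can be partitioned into at most 2k+1 parts such that within each part the family {R_s} is laminar. -/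
open Set

variable {V : Type*} [Fintype V] [DecidableEq V]

omit [Fintype V] in
lemma Laminar.symm' {X Y : Set V} (h : Laminar X Y) : Laminar Y X := by
  rcases h with h | h | h
  · exact Or.inl h.symm
  · exact Or.inr (Or.inr h)
  · exact Or.inr (Or.inl h)

open Classical in
lemma auxLam (k : ℕ) (R D : V → Set V) :
    ∀ n (T : Finset V), T.card = n →
    (∀ s ∈ T, (D s).ncard ≤ k) →
    (∀ a ∈ T, ∀ b ∈ T, a ≠ b → ¬ Laminar (R a) (R b) → a ∈ D b ∨ b ∈ D a) →
    ∃ c : V → Fin (2 * k + 1),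
      ∀ a ∈ T, ∀ b ∈ T, c a = c b → Laminar (R a) (R b) := by
  intro n
  induction n using Nat.strong_induction_on with
  | _ n ih =>
    intro T hcard hD hlam
    rcases T.eq_empty_or_nonempty with rfl | hne
    · exact ⟨fun _ => 0, fun a ha => absurd ha (Finset.notMem_empty a)⟩
    -- degree counting
    set dg : V → ℕ := fun s => (T.filter (fun b => b ≠ s ∧ ¬ Laminar (R s) (R b))).card with hdg
    have hDfin : ∀ b ∈ T, (T.filter (fun s => s ∈ D b)).card ≤ k := by
      intro b hb
      have hsub : (↑(T.filter (fun s => s ∈ D b)) : Set V) ⊆ D b := by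
        intro x hx
        simp only [Finset.coe_filter, Set.mem_setOf_eq] at hx
        exact hx.2
      calc (T.filter (fun s => s ∈ D b)).card
          = (↑(T.filter (fun s => s ∈ D b)) : Set V).ncard := (Set.ncard_coe_finset _).symm
        _ ≤ (D b).ncard := Set.ncard_le_ncard hsub (Set.toFinite _)
        _ ≤ k := hD b hb
    have hsum : ∑ s ∈ T, dg s ≤ 2 * k * T.card := by
      have hle : ∀ s ∈ T, dg s ≤ (T.filter (fun b => b ∈ D s)).card
          + (T.filter (fun b => s ∈ D b)).card := by
        intro s hs
        have hsub : T.filter (fun b => b ≠ s ∧ ¬ Laminar (R s) (R b))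
            ⊆ (T.filter (fun b => b ∈ D s)) ∪ (T.filter (fun b => s ∈ D b)) := by
          intro b hb
          simp only [Finset.mem_filter] at hb
          obtain ⟨hbT, hbs, hnl⟩ := hb
          rcases hlam s hs b hbT (Ne.symm hbs) hnl with h | h
          · exact Finset.mem_union.2 (Or.inr (Finset.mem_filter.2 ⟨hbT, h⟩))
          · exact Finset.mem_union.2 (Or.inl (Finset.mem_filter.2 ⟨hbT, h⟩))
        exact le_trans (Finset.card_le_card hsub) (Finset.card_union_le _ _)
      calc ∑ s ∈ T, dg s
          ≤ ∑ s ∈ T, ((T.filter (fun b => b ∈ D s)).card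
              + (T.filter (fun b => s ∈ D b)).card) := Finset.sum_le_sum hle
        _ = (∑ s ∈ T, (T.filter (fun b => b ∈ D s)).card)
              + ∑ s ∈ T, (T.filter (fun b => s ∈ D b)).card := Finset.sum_add_distrib
        _ ≤ k * T.card + k * T.card := by
            gcongr ?_ + ?_
            · calc ∑ s ∈ T, (T.filter (fun b => b ∈ D s)).card
                  ≤ ∑ s ∈ T, k := Finset.sum_le_sum (fun s hs => hDfin s hs)
                _ = k * T.card := by rw [Finset.sum_const, smul_eq_mul, mul_comm]
            · have hswap : ∑ s ∈ T, (T.filter (fun b => s ∈ D b)).card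
                  = ∑ b ∈ T, (T.filter (fun s => s ∈ D b)).card := by
                simp only [Finset.card_filter]
                exact Finset.sum_comm
              rw [hswap]
              calc ∑ b ∈ T, (T.filter (fun s => s ∈ D b)).card
                  ≤ ∑ b ∈ T, k := Finset.sum_le_sum (fun b hb => hDfin b hb)
                _ = k * T.card := by rw [Finset.sum_const, smul_eq_mul, mul_comm]
        _ = 2 * k * T.card := by ring
    have hexist : ∃ s ∈ T, dg s ≤ 2 * k := by
      by_contra hcon
      push_neg at hcon
      have : (2 * k + 1) * T.card ≤ ∑ s ∈ T, dg s := by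
        calc (2 * k + 1) * T.card = ∑ _ ∈ T, (2 * k + 1) := by
              rw [Finset.sum_const, smul_eq_mul, mul_comm]
          _ ≤ ∑ s ∈ T, dg s := Finset.sum_le_sum (fun s hs => hcon s hs)
      have h2 : (2 * k + 1) * T.card ≤ 2 * k * T.card := le_trans this hsum
      have hpos : 0 < T.card := Finset.card_pos.2 hne
      nlinarith
    obtain ⟨s, hsT, hdeg⟩ := hexist
    set T' := T.erase s with hT'
    have hcard' : T'.card = n - 1 := by rw [hT', Finset.card_erase_of_mem hsT, hcard]
    have hlt : n - 1 < n := by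
      have : 0 < n := by rw [← hcard]; exact Finset.card_pos.2 hne
      omega
    obtain ⟨c', hc'⟩ := ih (n - 1) hlt T' hcard'
      (fun a ha => hD a (Finset.mem_of_mem_erase ha))
      (fun a ha b hb => hlam a (Finset.mem_of_mem_erase ha) b (Finset.mem_of_mem_erase hb))
    set N := T'.filter (fun b => ¬ Laminar (R s) (R b)) with hN
    set used := N.image c' with hused
    have husedcard : used.card < 2 * k + 1 := by
      have h1 : used.card ≤ N.card := Finset.card_image_le
      have h2 : N.card ≤ dg s := by
        apply Finset.card_le_card
        intro b hb
        simp only [hN, Finset.mem_filter, hT', Finset.mem_erase] at hb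
        exact Finset.mem_filter.2 ⟨hb.1.2, hb.1.1, hb.2⟩
      omega
    have hfresh : ∃ col : Fin (2 * k + 1), col ∉ used := by
      by_contra hcon
      push_neg at hcon
      have : (Finset.univ : Finset (Fin (2 * k + 1))) ⊆ used := fun x _ => hcon x
      have := Finset.card_le_card this
      simp [Fintype.card_fin] at this
      omega
    obtain ⟨col, hcol⟩ := hfresh
    refine ⟨Function.update c' s col, ?_⟩
    intro a ha b hb hab
    by_cases has : a = s <;> by_cases hbs : b = s
    · subst has; subst hbs; exact Or.inr (Or.inl subset_rfl)
    · subst has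
      rw [Function.update_self, Function.update_of_ne hbs] at hab
      by_contra hnl
      have hbT' : b ∈ T' := Finset.mem_erase.2 ⟨hbs, hb⟩
      have : c' b ∈ used := Finset.mem_image_of_mem c' (Finset.mem_filter.2 ⟨hbT', hnl⟩)
      rw [← hab] at this
      exact hcol this
    · subst hbs
      rw [Function.update_self, Function.update_of_ne has] at hab
      apply Laminar.symm'
      by_contra hnl
      have haT' : a ∈ T' := Finset.mem_erase.2 ⟨has, ha⟩
      have : c' a ∈ used := Finset.mem_image_of_mem c' (Finset.mem_filter.2 ⟨haT', hnl⟩)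
      rw [hab] at this
      exact hcol this
    · rw [Function.update_of_ne has, Function.update_of_ne hbs] at hab
      exact hc' a (Finset.mem_erase.2 ⟨has, ha⟩) b (Finset.mem_erase.2 ⟨hbs, hb⟩) hab

theorem stmt6 (k : ℕ) (S : Set V) (R D : V → Set V)
    (hmem : ∀ s ∈ S, s ∈ R s) (hD : ∀ s ∈ S, (D s).ncard ≤ k)
    (hlam : ∀ a ∈ S, ∀ b ∈ S, a ≠ b → ¬ Laminar (R a) (R b) → a ∈ D b ∨ b ∈ D a) :
    ∃ c : V → Fin (2 * k + 1),
      ∀ a ∈ S, ∀ b ∈ S, c a = c b → Laminar (R a) (R b) := by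
  classical
  set T := (Set.toFinite S).toFinset with hT
  have hmemT : ∀ x, x ∈ T ↔ x ∈ S := fun x => Set.Finite.mem_toFinset _
  obtain ⟨c, hc⟩ := auxLam k R D T.card T rfl
    (fun s hs => hD s ((hmemT s).1 hs))
    (fun a ha b hb => hlam a ((hmemT a).1 ha) b ((hmemT b).1 hb))
  exact ⟨c, fun a ha b hb => hc a ((hmemT a).2 ha) b ((hmemT b).2 hb)⟩
end

section
/- For any two subsets A, B of the vertex set of a graph G, |∂A| + |∂B| ≥ |∂(A* ∩ B)| + |∂(B* ∩ A)|, where ∂X is the neighborhood of X and X* = V \ (X ∪ ∂X). -/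
open Set

variable {V : Type*} [Fintype V] [DecidableEq V]

lemma bdry_sub (G : SimpleGraph V) (A B : Set V) :
    bdry G (nstar G A ∩ B) ⊆ bdry G A ∪ bdry G B := by
  rintro v ⟨hv, u, ⟨huA, huB⟩, hadj⟩
  have hvA : v ∉ A := fun hvA => huA (Or.inr ⟨fun h => huA (Or.inl h), v, hvA, hadj.symm⟩)
  by_cases hvB : v ∈ B
  · have hvAs : v ∉ nstar G A := fun h => hv ⟨h, hvB⟩
    left
    simp only [nstar, Set.mem_compl_iff, not_not] at hvAs
    rcases hvAs with hA | hB
    · exact absurd hA hvA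
    · exact hB
  · exact Or.inr ⟨hvB, u, huB, hadj⟩

lemma bdry_notmem_left (G : SimpleGraph V) (A B : Set V) {v : V}
    (h : v ∈ bdry G (nstar G A ∩ B)) : v ∉ A := by
  rcases h with ⟨hv, u, ⟨huA, huB⟩, hadj⟩
  exact fun hvA => huA (Or.inr ⟨fun h => huA (Or.inl h), v, hvA, hadj.symm⟩)

lemma bdry_inter_sub (G : SimpleGraph V) (A B : Set V) :
    bdry G (nstar G A ∩ B) ∩ bdry G (nstar G B ∩ A) ⊆ bdry G A ∩ bdry G B := by
  rintro v ⟨h1, h2⟩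
  have hvA : v ∉ A := bdry_notmem_left G A B h1
  have hvB : v ∉ B := bdry_notmem_left G B A h2
  obtain ⟨-, u, ⟨-, huB⟩, hadj1⟩ := h1
  obtain ⟨-, w, ⟨-, hwA⟩, hadj2⟩ := h2
  exact ⟨⟨hvA, w, hwA, hadj2⟩, ⟨hvB, u, huB, hadj1⟩⟩

theorem stmt13 (G : SimpleGraph V) (A B : Set V) :
    (bdry G (nstar G A ∩ B)).ncard + (bdry G (nstar G B ∩ A)).ncard ≤
      (bdry G A).ncard + (bdry G B).ncard := by
  set X := bdry G (nstar G A ∩ B)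
  set Y := bdry G (nstar G B ∩ A)
  have h1 : X ∪ Y ⊆ bdry G A ∪ bdry G B := by
    apply Set.union_subset (bdry_sub G A B)
    intro v hv
    exact (bdry_sub G B A hv).symm
  have h2 : X ∩ Y ⊆ bdry G A ∩ bdry G B := bdry_inter_sub G A B
  calc X.ncard + Y.ncard = (X ∪ Y).ncard + (X ∩ Y).ncard :=
        (Set.ncard_union_add_ncard_inter X Y (Set.toFinite X) (Set.toFinite Y)).symm
    _ ≤ (bdry G A ∪ bdry G B).ncard + (bdry G A ∩ bdry G B).ncard :=
        Nat.add_le_add (Set.ncard_le_ncard h1 (Set.toFinite _))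
          (Set.ncard_le_ncard h2 (Set.toFinite _))
    _ = (bdry G A).ncard + (bdry G B).ncard :=
        Set.ncard_union_add_ncard_inter _ _ (Set.toFinite _) (Set.toFinite _)
end

section
/- In a k-connected graph, let F be the set of edges st with κ(s,t) = k and both endpoints of degree strictly greater than k. Then F forms a forest (contains no cycle); in particular |F| ≤ n − 1. -/
open Set

variable {V : Type*} [Fintype V] [DecidableEq V]

/-!
Suppose `F` contained a cycle. For an edge `ab` of it, a minimum `a`–`b` separator of `G - ab`
has `k - 1` vertices and, together with `b`, cuts off a tight set containing `a` in which `b`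
has no neighbour besides `a` (a *side* of `ab`). Take a side `B` of a cycle edge `st` of minimum
size and let `s'` be the other cycle neighbour of `s`. Uncrossing `B` with the sides of `ss'` and
counting shows that `s' ∉ B` and that `s` is the only neighbour of `s'` in `B`. But then
`B \ {s}`, which is nonempty because `deg s > k`, has at most `k - 1` boundary vertices while
`t` and `s'` lie outside it and its boundary, contradicting `k`-connectivity.
-/

section Boundary

omit [Fintype V] [DecidableEq V]

variable {G : SimpleGraph V} {A B : Set V}

lemma mem_nstar_iff {v : V} : v ∈ nstar G A ↔ v ∉ A ∧ ∀ a ∈ A, ¬ G.Adj a v := by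
  simp only [nstar, bdry, mem_compl_iff, mem_union, mem_ofPred_eq]
  grind

lemma mem_bdry_of_adj {a v : V} (ha : a ∈ A) (hv : v ∉ A) (hadj : G.Adj a v) :
    v ∈ bdry G A :=
  ⟨hv, a, ha, hadj⟩

lemma mem_union_bdry_of_adj {a v : V} (ha : a ∈ A) (hadj : G.Adj a v) : v ∈ A ∪ bdry G A := by
  by_cases hv : v ∈ A
  · exact Or.inl hv
  · exact Or.inr (mem_bdry_of_adj ha hv hadj)

lemma mem_bdry_of_notMem_nstar {v : V} (hA : v ∉ A) (hN : v ∉ nstar G A) : v ∈ bdry G A := by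
  simp only [nstar, mem_compl_iff, mem_union, not_not] at hN
  exact hN.resolve_left hA

lemma bdry_inter_subset :
    bdry G (A ∩ B) ⊆ (A ∩ bdry G B) ∪ (bdry G A ∩ B) ∪ (bdry G A ∩ bdry G B) := by
  rintro v ⟨hv, a, ⟨haA, haB⟩, hadj⟩
  rcases mem_union_bdry_of_adj haA hadj with h1 | h1 <;>
    rcases mem_union_bdry_of_adj haB hadj with h2 | h2
  exacts [absurd ⟨h1, h2⟩ hv, Or.inl (Or.inl ⟨h1, h2⟩), Or.inl (Or.inr ⟨h1, h2⟩), Or.inr ⟨h1, h2⟩]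

lemma bdry_inter_subset_union : bdry G (A ∩ B) ⊆ bdry G A ∪ bdry G B := by
  rintro v ⟨hv, a, ⟨haA, haB⟩, hadj⟩
  by_cases hvA : v ∈ A
  · exact Or.inr (mem_bdry_of_adj haB (fun h => hv ⟨hvA, h⟩) hadj)
  · exact Or.inl (mem_bdry_of_adj haA hvA hadj)

lemma bdry_union_subset : bdry G (A ∪ B) ⊆ bdry G A ∪ bdry G B := by
  rintro v ⟨hv, a, ha | ha, hadj⟩
  · exact Or.inl (mem_bdry_of_adj ha (fun h => hv (Or.inl h)) hadj)
  · exact Or.inr (mem_bdry_of_adj ha (fun h => hv (Or.inr h)) hadj)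

lemma bdry_inter_inter_bdry_union_subset :
    bdry G (A ∩ B) ∩ bdry G (A ∪ B) ⊆ bdry G A ∩ bdry G B := by
  rintro v ⟨⟨-, a, ⟨haA, haB⟩, hadj⟩, hv, -⟩
  exact ⟨mem_bdry_of_adj haA (fun h => hv (Or.inl h)) hadj,
    mem_bdry_of_adj haB (fun h => hv (Or.inr h)) hadj⟩

lemma nstar_subset_nstar_inter_left : nstar G A ⊆ nstar G (A ∩ B) := by
  intro v hv
  rw [mem_nstar_iff] at hv ⊢
  exact ⟨fun h => hv.1 h.1, fun a ha => hv.2 a ha.1⟩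

lemma nstar_union : nstar G (A ∪ B) = nstar G A ∩ nstar G B := by
  ext v
  simp only [mem_nstar_iff, mem_inter_iff, mem_union]
  grind

lemma exists_mem_bdry_mem_support {a z : V} (p : G.Walk a z) (ha : a ∈ A) (hz : z ∉ A) :
    ∃ v ∈ bdry G A, v ∈ p.support := by
  induction p with
  | nil => exact absurd ha hz
  | @cons u w z hadj q ih =>
    by_cases hw : w ∈ A
    · obtain ⟨v, hv, hvq⟩ := ih hw hz
      exact ⟨v, hv, List.mem_cons_of_mem _ hvq⟩
    · exact ⟨w, mem_bdry_of_adj ha hw hadj, List.mem_cons_of_mem _ q.start_mem_support⟩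

lemma isSep_bdry {a z : V} (ha : a ∈ A) (hz : z ∈ nstar G A) : IsSep G a z (bdry G A) := by
  rw [mem_nstar_iff] at hz
  refine ⟨fun h => h.1 ha, fun h => ?_, fun p => exists_mem_bdry_mem_support p ha hz.1⟩
  obtain ⟨-, a', ha', hadj⟩ := h
  exact hz.2 a' ha' hadj

end Boundary

section Reach

omit [Fintype V] [DecidableEq V]

variable {G : SimpleGraph V} {C : Set V} {x y v w : V}

lemma mem_reach_self (hx : x ∉ C) : x ∈ Reach G C x :=
  ⟨.nil, by simpa using hx⟩

lemma notMem_of_mem_reach (hv : v ∈ Reach G C x) : v ∉ C := by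
  obtain ⟨p, hp⟩ := hv
  exact hp v p.end_mem_support

lemma mem_reach_of_adj (hv : v ∈ Reach G C x) (hadj : G.Adj v w) (hw : w ∉ C) :
    w ∈ Reach G C x := by
  obtain ⟨p, hp⟩ := hv
  refine ⟨p.concat hadj, fun u hu => ?_⟩
  rw [SimpleGraph.Walk.support_concat, List.mem_append, List.mem_singleton] at hu
  rcases hu with hu | rfl
  exacts [hp u hu, hw]

lemma disjoint_reach (hC : IsSep G x y C) : Disjoint (Reach G C x) (Reach G C y) := by
  rw [disjoint_left]
  rintro z ⟨p, hp⟩ ⟨q, hq⟩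
  obtain ⟨v, hvC, hv⟩ := hC.2.2 (p.append q.reverse)
  rw [SimpleGraph.Walk.mem_support_append_iff, SimpleGraph.Walk.support_reverse,
    List.mem_reverse] at hv
  exact hv.elim (hp v · hvC) (hq v · hvC)

lemma notMem_reach (hC : IsSep G x y C) : y ∉ Reach G C x :=
  fun h => disjoint_left.mp (disjoint_reach hC) h (mem_reach_self hC.2.1)

lemma IsSep.symm (hC : IsSep G x y C) : IsSep G y x C := by
  refine ⟨hC.2.1, hC.1, fun p => ?_⟩
  obtain ⟨v, hvC, hv⟩ := hC.2.2 p.reverse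
  exact ⟨v, hvC, by rwa [SimpleGraph.Walk.support_reverse, List.mem_reverse] at hv⟩

lemma exists_isSep_ncard_eq_kappa (hne : x ≠ y) (hnadj : ¬ G.Adj x y) :
    ∃ C : Set V, C.ncard = kappa G x y ∧ IsSep G x y C := by
  refine Nat.sInf_mem (s := {n | ∃ C : Set V, C.ncard = n ∧ IsSep G x y C})
    ⟨_, {x, y}ᶜ, rfl, by simp, by simp, fun p => ?_⟩
  cases p with
  | nil => exact absurd rfl hne
  | @cons _ w _ hadj q =>
    refine ⟨w, ?_, List.mem_cons_of_mem _ q.start_mem_support⟩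
    simp only [mem_compl_iff, mem_insert_iff, mem_singleton_iff, not_or]
    exact ⟨hadj.ne.symm, fun h => hnadj (h ▸ hadj)⟩

lemma deleteEdges_adj_of_ne {a b : V} (hab : G.Adj a b) (hne : s(a, b) ≠ s(x, y)) :
    (G.deleteEdges {s(x, y)}).Adj a b :=
  SimpleGraph.deleteEdges_adj.mpr ⟨hab, hne⟩

lemma bdry_reach_subset (hC : IsSep (G.deleteEdges {s(x, y)}) x y C) :
    bdry G (Reach (G.deleteEdges {s(x, y)}) C x) ⊆ insert y C := by
  rintro v ⟨hvP, a, haP, hadj⟩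
  by_cases he : s(a, v) = s(x, y)
  · rcases Sym2.eq_iff.mp he with ⟨-, rfl⟩ | ⟨rfl, -⟩
    · exact mem_insert v C
    · exact absurd haP (notMem_reach hC)
  · by_contra hv
    exact hvP (mem_reach_of_adj haP (deleteEdges_adj_of_ne hadj he) fun h => hv (Or.inr h))

lemma neighborSet_inter_reach_subset (hC : IsSep (G.deleteEdges {s(x, y)}) x y C) :
    G.neighborSet y ∩ Reach (G.deleteEdges {s(x, y)}) C x ⊆ {x} := by
  rintro v ⟨hvy, hvP⟩
  by_contra hvx
  have hne : s(v, y) ≠ s(x, y) := fun h => hvx (Sym2.congr_left.mp h)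
  exact notMem_reach hC (mem_reach_of_adj hvP (deleteEdges_adj_of_ne hvy.symm hne) hC.2.1)

lemma reach_subset_insert_nstar {G' : SimpleGraph V} (hC : IsSep G' x y C)
    (hbdry : bdry G (Reach G' C y) = insert x C) :
    Reach G' C x ⊆ insert x (nstar G (Reach G' C y)) := by
  intro v hv
  refine or_iff_not_imp_left.mpr fun hvx => ?_
  rintro (h | h)
  · exact disjoint_left.mp (disjoint_reach hC) hv h
  · rw [hbdry] at h
    exact h.elim hvx (notMem_of_mem_reach hv)

end Reach

section Sides

omit [Fintype V] [DecidableEq V]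

variable {G : SimpleGraph V} {k : ℕ} {A B : Set V} {a b : V}

structure IsSide (G : SimpleGraph V) (k : ℕ) (A : Set V) (a b : V) : Prop where
  tight : Tight G k A
  mem : a ∈ A
  mem_bdry : b ∈ bdry G A
  neighborSet_inter_subset : G.neighborSet b ∩ A ⊆ {a}

def HasSides (G : SimpleGraph V) (k : ℕ) (x y : V) : Prop :=
  ∃ P Q, IsSide G k P x y ∧ IsSide G k Q y x ∧
    P ⊆ insert x (nstar G Q) ∧ Q ⊆ insert y (nstar G P)

lemma IsSide.adj (hA : IsSide G k A a b) : G.Adj a b := by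
  obtain ⟨-, a', ha', hadj⟩ := hA.mem_bdry
  obtain rfl : a' = a := hA.neighborSet_inter_subset ⟨hadj.symm, ha'⟩
  exact hadj

lemma IsSide.inter (hA : IsSide G k A a b) (hBA : Tight G k (B ∩ A)) (ha : a ∈ B) :
    IsSide G k (B ∩ A) a b where
  tight := hBA
  mem := ⟨ha, hA.mem⟩
  mem_bdry := mem_bdry_of_adj ⟨ha, hA.mem⟩ (fun h => hA.mem_bdry.1 h.2) hA.adj
  neighborSet_inter_subset _ hv := hA.neighborSet_inter_subset ⟨hv.1, hv.2.2⟩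

end Sides

section Uncrossing

omit [DecidableEq V]

variable {G : SimpleGraph V} {k : ℕ} {A B W W' : Set V} {e : V}

lemma ncard_bdry_inter_add_ncard_bdry_union_le :
    (bdry G (A ∩ B)).ncard + (bdry G (A ∪ B)).ncard ≤ (bdry G A).ncard + (bdry G B).ncard := by
  have hunion := ncard_le_ncard
    (union_subset (bdry_inter_subset_union (G := G) (A := A) (B := B)) bdry_union_subset)
  have hinter := ncard_le_ncard (bdry_inter_inter_bdry_union_subset (G := G) (A := A) (B := B))
  have := ncard_union_add_ncard_inter (bdry G (A ∩ B)) (bdry G (A ∪ B))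
  have := ncard_union_add_ncard_inter (bdry G A) (bdry G B)
  omega

lemma ncard_eq_inter_add_inter_bdry_add_inter_nstar (X : Set V) :
    X.ncard = (X ∩ A).ncard + (X ∩ bdry G A).ncard + (X ∩ nstar G A).ncard := by
  have hbdry : X \ A ∩ bdry G A = X ∩ bdry G A := by
    ext v; simp only [mem_inter_iff, mem_sdiff]; grind [bdry]
  have hnstar : (X \ A) \ bdry G A = X ∩ nstar G A := by
    ext v; simp only [nstar, mem_sdiff, mem_inter_iff, mem_compl_iff, mem_union]; tauto
  rw [← ncard_inter_add_ncard_sdiff_eq_ncard X A, ← hbdry, ← hnstar,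
    ← ncard_inter_add_ncard_sdiff_eq_ncard (X \ A) (bdry G A)]
  ring

lemma KConn.le_ncard_bdry (hG : KConn G k) (hA : A.Nonempty) (hA' : (nstar G A).Nonempty) :
    k ≤ (bdry G A).ncard := by
  obtain ⟨a, ha⟩ := hA
  obtain ⟨z, hz⟩ := hA'
  exact hG.2 a z (fun h => ((mem_nstar_iff.mp (h ▸ hz)).1 ha)) _ (isSep_bdry ha hz)

lemma KConn.tight_inter (hG : KConn G k) (hA : Tight G k A) (hB : Tight G k B)
    (hAB : (A ∩ B).Nonempty) (hN : (nstar G A ∩ nstar G B).Nonempty) : Tight G k (A ∩ B) := by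
  have hN₁ : (nstar G (A ∩ B)).Nonempty := hA.2.mono nstar_subset_nstar_inter_left
  have h₁ := hG.le_ncard_bdry hAB hN₁
  have h₂ := hG.le_ncard_bdry (hAB.mono (inter_subset_left.trans subset_union_left))
    (nstar_union (G := G) ▸ hN)
  have := ncard_bdry_inter_add_ncard_bdry_union_le (G := G) (A := A) (B := B)
  have := hA.1
  have := hB.1
  exact ⟨by omega, hN₁⟩

lemma KConn.ncard_nstar_add_two_le (hG : KConn G k) (hB : Tight G k B) (hW : Tight G k W)
    (hBW : (B ∩ W).Nonempty) (hnt : ¬ Tight G k (B ∩ W)) :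
    (nstar G W).ncard + 2 ≤ B.ncard := by
  have hN : nstar G B ∩ nstar G W = ∅ := by
    by_contra h
    exact hnt (hG.tight_inter hB hW hBW (nonempty_iff_ne_empty.mpr h))
  have hgt : k < (bdry G (B ∩ W)).ncard := by
    have hNBW := hB.2.mono (nstar_subset_nstar_inter_left (B := W))
    exact lt_of_le_of_ne (hG.le_ncard_bdry hBW hNBW) fun h => hnt ⟨h.symm, hNBW⟩
  have hcorner : (bdry G (B ∩ W)).ncard ≤
      (B ∩ bdry G W).ncard + (bdry G B ∩ W).ncard + (bdry G B ∩ bdry G W).ncard :=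
    calc _ ≤ _ := ncard_le_ncard bdry_inter_subset
      _ ≤ _ := ncard_union_le _ _
      _ ≤ _ := add_le_add_left (ncard_union_le _ _) _
  -- `W* ⊆ B ∪ ∂B` because `W*` misses `B*`
  have hcover : nstar G W ⊆ (B ∩ nstar G W) ∪ (bdry G B ∩ nstar G W) := by
    intro v hv
    by_cases hvB : v ∈ B
    · exact Or.inl ⟨hvB, hv⟩
    · refine Or.inr ⟨mem_bdry_of_notMem_nstar hvB fun h => ?_, hv⟩
      exact (eq_empty_iff_forall_notMem.mp hN) v ⟨h, hv⟩
  have hW := (ncard_le_ncard hcover).trans (ncard_union_le _ _)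
  -- splitting `∂B` along `W, ∂W, W*`, the corner bound forces `|∂B ∩ W*| < |B ∩ ∂W|`
  have hS := ncard_eq_inter_add_inter_bdry_add_inter_nstar (G := G) (A := W) (bdry G B)
  have hB' := ncard_eq_inter_add_inter_bdry_add_inter_nstar (G := G) (A := W) B
  have hBW' := (ncard_pos (s := B ∩ W)).mpr hBW
  rw [hB.1] at hS
  omega

lemma KConn.tight_inter_of_le_ncard (hG : KConn G k) (hB : Tight G k B) (hW : Tight G k W)
    (hBW : (B ∩ W).Nonempty) (hW' : W' ⊆ insert e (nstar G W)) (hle : B.ncard ≤ W'.ncard) :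
    Tight G k (B ∩ W) := by
  by_contra hnt
  have := hG.ncard_nstar_add_two_le hB hW hBW hnt
  have := (ncard_le_ncard hW').trans (ncard_insert_le e _)
  omega

end Uncrossing

section CriticalEdge

omit [DecidableEq V]

variable {G : SimpleGraph V} {k : ℕ} {C : Set V} {x y : V}

lemma KConn.isSide_reach (hG : KConn G k) (hxy : G.Adj x y)
    (hC : IsSep (G.deleteEdges {s(x, y)}) x y C) (hCk : C.ncard + 1 = k) (hy : k < deg G y) :
    IsSide G k (Reach (G.deleteEdges {s(x, y)}) C x) x y ∧
      bdry G (Reach (G.deleteEdges {s(x, y)}) C x) = insert y C := by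
  set P := Reach (G.deleteEdges {s(x, y)}) C x
  have hxP : x ∈ P := mem_reach_self hC.1
  have hbdry : bdry G P ⊆ insert y C := bdry_reach_subset hC
  obtain ⟨w, hyw, hw⟩ : ∃ w ∈ G.neighborSet y, w ∉ insert x C := by
    refine not_subset.mp fun h => ?_
    have := (ncard_le_ncard h).trans (ncard_insert_le x C)
    rw [deg] at hy
    omega
  rw [mem_insert_iff, not_or] at hw
  have hwQ : w ∈ Reach (G.deleteEdges {s(x, y)}) C y := by
    refine mem_reach_of_adj (mem_reach_self hC.2.1) (deleteEdges_adj_of_ne hyw fun h => ?_) hw.2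
    rcases Sym2.eq_iff.mp h with ⟨rfl, -⟩ | ⟨-, rfl⟩
    exacts [G.irrefl hxy, hw.1 rfl]
  have hwP : w ∈ nstar G P := by
    rintro (h | h)
    · exact disjoint_left.mp (disjoint_reach hC) h hwQ
    · rcases hbdry h with h | h
      exacts [G.irrefl (h ▸ hyw), hw.2 h]
  have hcard : (insert y C).ncard = k := by rw [ncard_insert_of_notMem hC.2.1]; exact hCk
  have hbdry_eq : bdry G P = insert y C :=
    eq_of_subset_of_ncard_le hbdry (hcard ▸ hG.le_ncard_bdry ⟨x, hxP⟩ ⟨w, hwP⟩)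
  exact ⟨⟨⟨hbdry_eq ▸ hcard, w, hwP⟩, hxP, hbdry_eq ▸ mem_insert y C,
    neighborSet_inter_reach_subset hC⟩, hbdry_eq⟩

lemma KConn.hasSides (hG : KConn G k) (hxy : G.Adj x y)
    (hκ : kappa (G.deleteEdges {s(x, y)}) x y + 1 = k) (hx : k < deg G x) (hy : k < deg G y) :
    HasSides G k x y := by
  have hnadj : ¬ (G.deleteEdges {s(x, y)}).Adj x y := by simp
  obtain ⟨C, hCk, hC⟩ := exists_isSep_ncard_eq_kappa hxy.ne hnadj
  have hswap : G.deleteEdges {s(y, x)} = G.deleteEdges {s(x, y)} := by rw [Sym2.eq_swap]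
  obtain ⟨hP, hbP⟩ := hG.isSide_reach hxy hC (by omega) hy
  obtain ⟨hQ, hbQ⟩ := hG.isSide_reach hxy.symm (hswap ▸ hC.symm) (by omega) hx
  rw [hswap] at hQ hbQ
  exact ⟨_, _, hP, hQ, reach_subset_insert_nstar hC hbQ, reach_subset_insert_nstar hC.symm hbP⟩

end CriticalEdge

section MinimalSide

omit [DecidableEq V]

variable {G : SimpleGraph V} {k : ℕ} {B P Q : Set V} {s s' : V}

lemma KConn.notMem_of_isSide_minimal (hG : KConn G k) (hB : Tight G k B) (hs : s ∈ B)
    (hQ : IsSide G k Q s' s) (hPQ : P ⊆ insert s (nstar G Q))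
    (hminQ : ∀ A, IsSide G k A s' s → B.ncard ≤ A.ncard) (hminP : B.ncard ≤ P.ncard) :
    s' ∉ B := by
  intro hs'B
  have hBQ := hG.tight_inter_of_le_ncard hB hQ.tight ⟨s', hs'B, hQ.mem⟩ hPQ hminP
  have hlt : (B ∩ Q).ncard < B.ncard :=
    ncard_lt_ncard ⟨inter_subset_left, fun h => hQ.mem_bdry.1 (h hs).2⟩
  exact (hminQ _ (hQ.inter hBQ hs'B)).not_gt hlt

lemma KConn.neighborSet_inter_subset_of_isSide_minimal (hG : KConn G k) (hB : Tight G k B)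
    (hs : s ∈ B) (hP : IsSide G k P s s') (hQP : Q ⊆ insert s' (nstar G P))
    (hminP : ∀ A, IsSide G k A s s' → B.ncard ≤ A.ncard) (hminQ : B.ncard ≤ Q.ncard) :
    G.neighborSet s' ∩ B ⊆ {s} := by
  have hBP := hG.tight_inter_of_le_ncard hB hP.tight ⟨s, hs, hP.mem⟩ hQP hminQ
  have hBsub : B ⊆ P := by
    have := eq_of_subset_of_ncard_le inter_subset_left (hminP _ (hP.inter hBP hs))
    exact this ▸ inter_subset_right
  exact fun v hv => hP.neighborSet_inter_subset ⟨hv.1, hBsub hv.2⟩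

lemma exists_adj_mem_of_ncard_bdry_lt (hs : s ∈ B) (hdeg : (bdry G B).ncard < deg G s) :
    ∃ b ∈ B, G.Adj s b := by
  by_contra! h
  have hsub : G.neighborSet s ⊆ bdry G B := fun v hv => mem_bdry_of_adj hs (h v · hv) hv
  exact hdeg.not_ge (ncard_le_ncard hsub (toFinite _))

lemma KConn.false_of_pendant_pair (hG : KConn G k) (hB : (bdry G B).ncard = k) {b t t' : V}
    (hb : b ∈ B) (hbs : b ≠ s) (ht : t ∈ bdry G B) (ht' : t' ∈ bdry G B)
    (htt' : t ≠ t') (hNt : G.neighborSet t ∩ B ⊆ {s}) (hNt' : G.neighborSet t' ∩ B ⊆ {s}) :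
    False := by
  have hsees {u v : V} (hu : G.neighborSet u ∩ B ⊆ {s}) (hv : v ∈ B \ {s}) : ¬ G.Adj v u :=
    fun h => hv.2 (hu ⟨h.symm, hv.1⟩)
  have hbdry : bdry G (B \ {s}) ⊆ insert s (bdry G B \ {t, t'}) := by
    rintro v ⟨hv, a, ha, hadj⟩
    by_cases hvs : v = s
    · exact Or.inl hvs
    · have hvB : v ∉ B := fun h => hv ⟨h, hvs⟩
      refine Or.inr ⟨mem_bdry_of_adj ha.1 hvB hadj, ?_⟩
      rintro (rfl | rfl)
      exacts [hsees hNt ha hadj, hsees hNt' ha hadj]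
  have htW : t ∈ nstar G (B \ {s}) := by
    rw [mem_nstar_iff]
    exact ⟨fun h => ht.1 h.1, fun a ha hadj => hsees hNt ha hadj⟩
  have hpair : ({t, t'} : Set V).ncard = 2 := ncard_pair htt'
  have hpair_sub : ({t, t'} : Set V) ⊆ bdry G B := insert_subset ht (singleton_subset_iff.mpr ht')
  have h₁ := hG.le_ncard_bdry (A := B \ {s}) ⟨b, hb, hbs⟩ ⟨t, htW⟩
  have h₂ := (ncard_le_ncard hbdry).trans (ncard_insert_le _ _)
  have h₃ := ncard_sdiff hpair_sub
  have h₄ := ncard_le_ncard hpair_sub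
  omega

theorem KConn.eq_bot_of_hasSides (hG : KConn G k) {H : SimpleGraph V}
    (hsides : ∀ a b, H.Adj a b → HasSides G k a b) (hdeg : ∀ a b, H.Adj a b → k < deg G a)
    (hbranch : ∀ a b, H.Adj a b → ∃ c, H.Adj a c ∧ c ≠ b) : H = ⊥ := by
  refine SimpleGraph.eq_bot_iff_forall_not_adj.mpr fun a b hab => ?_
  let M : Set (Set V × V × V) := {p | H.Adj p.2.1 p.2.2 ∧ IsSide G k p.1 p.2.1 p.2.2}
  obtain ⟨P₀, -, hP₀, -⟩ := hsides a b hab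
  obtain ⟨⟨B, s, t⟩, ⟨hst, hB⟩, hmin⟩ :=
    M.exists_min_image (fun p => p.1.ncard) M.toFinite ⟨⟨P₀, a, b⟩, hab, hP₀⟩
  have hmin' {A : Set V} {a b : V} (hab : H.Adj a b) (hA : IsSide G k A a b) :
      B.ncard ≤ A.ncard :=
    hmin ⟨A, a, b⟩ ⟨hab, hA⟩
  obtain ⟨s', hss', hs't⟩ := hbranch s t hst
  obtain ⟨P, Q, hP, hQ, hPQ, hQP⟩ := hsides s s' hss'
  have hs'B : s' ∉ B := hG.notMem_of_isSide_minimal hB.tight hB.mem hQ hPQ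
    (fun _ => hmin' hss'.symm) (hmin' hss' hP)
  have hNs' := hG.neighborSet_inter_subset_of_isSide_minimal hB.tight hB.mem hP hQP
    (fun _ => hmin' hss') (hmin' hss'.symm hQ)
  obtain ⟨b₀, hb₀, hsb₀⟩ :=
    exists_adj_mem_of_ncard_bdry_lt hB.mem (hB.tight.1 ▸ hdeg s t hst)
  exact hG.false_of_pendant_pair hB.tight.1 hb₀ hsb₀.ne.symm hB.mem_bdry
    (mem_bdry_of_adj hB.mem hs'B hP.adj) hs't.symm hB.neighborSet_inter_subset hNs'

theorem KConn.isAcyclic_of_forall_adj (hG : KConn G k) {F : SimpleGraph V}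
    (hF : ∀ a b, F.Adj a b → HasSides G k a b ∧ k < deg G a) : F.IsAcyclic := by
  intro v c hc
  have hbot := hG.eq_bot_of_hasSides (H := c.toSubgraph.spanningCoe)
    (fun a b h => (hF a b (c.toSubgraph.adj_sub h)).1)
    (fun a b h => (hF a b (c.toSubgraph.adj_sub h)).2)
    (fun a b h => by
      have ha := c.mem_verts_toSubgraph.mp (c.toSubgraph.edge_vert h)
      exact exists_ne_of_one_lt_ncard (hc.ncard_neighborSet_toSubgraph_eq_two ha ▸ one_lt_two) b)
  have hsnd := c.toSubgraph_adj_snd hc.not_nil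
  rw [← SimpleGraph.Subgraph.spanningCoe_adj, hbot] at hsnd
  exact hsnd

end MinimalSide

omit [DecidableEq V] in
lemma SimpleGraph.IsAcyclic.ncard_edgeSet_le {F : SimpleGraph V} (hF : F.IsAcyclic) :
    F.edgeSet.ncard ≤ Fintype.card V - 1 := by
  classical
  rcases isEmpty_or_nonempty V with hV | hV
  · simp [Set.eq_empty_of_isEmpty F.edgeSet]
  obtain ⟨T, hFT, -, hT⟩ := SimpleGraph.connected_top.exists_isTree_le_of_le_of_isAcyclic le_top hF
  have := hT.card_edgeFinset
  rw [← ncard_coe_finset, SimpleGraph.coe_edgeFinset] at this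
  have := ncard_le_ncard (SimpleGraph.edgeSet_mono hFT)
  omega

theorem stmt17 (G : SimpleGraph V) (k : ℕ) (hG : KConn G k)
    (F : SimpleGraph V)
    (hF : ∀ u v : V, F.Adj u v ↔ G.Adj u v ∧
        kappa (G.deleteEdges {s(u, v)}) u v + 1 = k ∧ k < deg G u ∧ k < deg G v) :
    F.IsAcyclic ∧ F.edgeSet.ncard ≤ Fintype.card V - 1 := by
  have hacyc : F.IsAcyclic := hG.isAcyclic_of_forall_adj fun a b h =>
    have ⟨hab, hκ, ha, hb⟩ := (hF a b).mp h
    ⟨hG.hasSides hab hκ ha hb, ha⟩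
  exact ⟨hacyc, hacyc.ncard_edgeSet_le⟩
end
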